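/- arXiv:2604.01856 — 2 statements merged into one kernel-verified Lean document; each statement's English description precedes it below -/
import Mathlib

section
/- Let J=(a,b) be a bounded interval, κ ∈ L¹(J), and (κ_ε)_{ε>0} bounded continuous functions with ‖κ_ε - κ‖_{L¹(J)} → 0. Let X_ε, X : J → ℝ² be the arc-length parametrized curves with curvatures κ_ε and κ and coinciding initial data (position, first and second derivative) at s = a. Then for every s ∈ J, ‖X_ε(s) - X(s)‖₂ ≤ M·M_ε·(b-a)·‖κ_ε - κ‖_{L¹(J)} → 0 as ε → 0; i.e. the regularized curves converge pointwise to the degenerate curve. -/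
/-!
Write the Frenet frame as `z = (t, n) : ℝ → E × E` (max norm). The Frenet–Serret system becomes
the linear equation `z' = κ • J z` with `J (t, n) = (n, -t)`, and `‖J‖ ≤ 1`. For two solutions
with the same initial value, `‖z₁ - z₂‖ ≤ ∫ |κ₁| ‖z₁ - z₂‖ + ‖z₂‖_∞ ‖κ₁ - κ₂‖_{L¹}`, so Grönwall's
inequality with an `L¹` coefficient gives `‖z₁ - z₂‖ ≤ ‖z₂‖_∞ ‖κ₁ - κ₂‖_{L¹} e^{‖κ₁‖_{L¹}}`.
Comparing `z` with its constant initial value yields `‖z‖_∞ ≤ M`, comparing `z_ε` with `z` and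
integrating `t_ε - t` yields the bound on `X_ε - X`, using `e^K ≤ 1 + K e^K`. Since
`|‖κ_ε‖_{L¹} - ‖κ‖_{L¹}| ≤ ‖κ_ε - κ‖_{L¹}`, the factor `M_ε` stays bounded as `ε → 0`.

Grönwall's inequality for an `L¹` coefficient `k` needs no differentiation: by the intermediate
value theorem `[a, x]` splits into `N` pieces on each of which `∫ k ≤ K / N`, which gives
`(1 - K / N) ^ N u x ≤ u a` for the nondecreasing majorant `u`, and `(1 - K / N) ^ N → e^{-K}`.
-/

open MeasureTheory Set Filter Topology Real

section Gronwall

variable {a b : ℝ} {u K : ℝ → ℝ}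

theorem one_sub_pow_mul_le_of_one_sub_mul_le (hK : ContinuousOn K (Icc a b)) (hKa : K a = 0)
    (hu0 : ∀ x ∈ Icc a b, 0 ≤ u x)
    (hstep : ∀ x ∈ Icc a b, ∀ y ∈ Icc a x, (1 - (K x - K y)) * u x ≤ u y)
    {δ : ℝ} (hδ0 : 0 ≤ δ) (hδ1 : δ ≤ 1) (i : ℕ) :
    ∀ x ∈ Icc a b, K x ≤ i * δ → (1 - δ) ^ i * u x ≤ u a := by
  induction i with
  | zero =>
    intro x hx hKx
    have := hstep x hx a (left_mem_Icc.2 hx.1)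
    rw [hKa] at this
    simp only [CharP.cast_eq_zero, zero_mul] at hKx
    nlinarith [hu0 x hx]
  | succ i ih =>
    intro x hx hKx
    by_cases hKi : K x ≤ i * δ
    · calc (1 - δ) ^ (i + 1) * u x ≤ (1 - δ) ^ i * u x :=
            mul_le_mul_of_nonneg_right
              (pow_le_pow_of_le_one (by linarith) (by linarith) i.le_succ) (hu0 x hx)
        _ ≤ u a := ih x hx hKi
    · obtain ⟨y, hy, hKy⟩ : ∃ y ∈ Icc a x, K y = i * δ :=
        intermediate_value_Icc hx.1 (hK.mono (Icc_subset_Icc_right hx.2))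
          ⟨hKa ▸ by positivity, (not_le.1 hKi).le⟩
      calc (1 - δ) ^ (i + 1) * u x = (1 - δ) ^ i * ((1 - δ) * u x) := by ring
        _ ≤ (1 - δ) ^ i * u y := by
            gcongr
            refine le_trans ?_ (hstep x hx y hy)
            push_cast at hKx
            nlinarith [hu0 x hx]
        _ ≤ u a := ih y ⟨hy.1, hy.2.trans hx.2⟩ hKy.le

theorem le_mul_exp_of_one_sub_mul_le (hK : ContinuousOn K (Icc a b)) (hKa : K a = 0)
    (hK0 : ∀ x ∈ Icc a b, 0 ≤ K x) (hu0 : ∀ x ∈ Icc a b, 0 ≤ u x)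
    (hstep : ∀ x ∈ Icc a b, ∀ y ∈ Icc a x, (1 - (K x - K y)) * u x ≤ u y) :
    ∀ x ∈ Icc a b, u x ≤ u a * exp (K x) := by
  intro x hx
  have hlim : Tendsto (fun N : ℕ => (1 + -K x / N) ^ N * u x) atTop (𝓝 (exp (-K x) * u x)) :=
    (tendsto_one_add_div_pow_exp (-K x)).mul_const _
  have hbound : exp (-K x) * u x ≤ u a := by
    refine le_of_tendsto hlim ?_
    filter_upwards [eventually_gt_atTop ⌈K x⌉₊] with N hN
    have hN : K x < N := (Nat.le_ceil _).trans_lt (by exact_mod_cast hN)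
    have hN0 : (0 : ℝ) < N := (hK0 x hx).trans_lt hN
    rw [neg_div, ← sub_eq_add_neg]
    exact one_sub_pow_mul_le_of_one_sub_mul_le hK hKa hu0 hstep
      (div_nonneg (hK0 x hx) hN0.le) ((div_le_one hN0).2 hN.le) N x hx
      (by rw [mul_div_cancel₀ _ hN0.ne'])
  rw [exp_neg, inv_mul_le_iff₀ (exp_pos _)] at hbound
  linarith

theorem le_mul_exp_integral_of_le_add_integral {c : ℝ} {k g : ℝ → ℝ}
    (hk : IntervalIntegrable k volume a b) (hk0 : ∀ τ, 0 ≤ k τ)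
    (hg : ContinuousOn g (Icc a b)) (hg0 : ∀ x ∈ Icc a b, 0 ≤ g x)
    (h : ∀ x ∈ Icc a b, g x ≤ c + ∫ τ in a..x, k τ * g τ) :
    ∀ x ∈ Icc a b, g x ≤ c * exp (∫ τ in a..x, k τ) := by
  intro x₀ hx₀
  have hab : a ≤ b := hx₀.1.trans hx₀.2
  have ha : a ∈ Icc a b := left_mem_Icc.2 hab
  have hkg : IntervalIntegrable (fun τ => k τ * g τ) volume a b :=
    hk.mul_continuousOn (by rwa [uIcc_of_le hab])
  have hsub : ∀ x ∈ Icc a b, ∀ y ∈ Icc a b, uIcc y x ⊆ uIcc a b := fun x hx y hy =>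
    uIcc_subset_uIcc (Icc_subset_uIcc hy) (Icc_subset_uIcc hx)
  have hdiff : ∀ {f : ℝ → ℝ}, IntervalIntegrable f volume a b → ∀ x ∈ Icc a b, ∀ y ∈ Icc a b,
      (∫ τ in a..x, f τ) - ∫ τ in a..y, f τ = ∫ τ in y..x, f τ := fun hf x hx y hy =>
    intervalIntegral.integral_interval_sub_left (hf.mono_set (hsub x hx a ha))
      (hf.mono_set (hsub y hy a ha))
  set u : ℝ → ℝ := fun x => c + ∫ τ in a..x, k τ * g τ with hu
  have hu_sub : ∀ x ∈ Icc a b, ∀ y ∈ Icc a b, u x - u y = ∫ τ in y..x, k τ * g τ :=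
    fun x hx y hy => by rw [hu, add_sub_add_left_eq_sub, hdiff hkg x hx y hy]
  have hu_mono : ∀ x ∈ Icc a b, ∀ y ∈ Icc a x, u y ≤ u x := by
    intro x hx y hy
    have : 0 ≤ ∫ τ in y..x, k τ * g τ := intervalIntegral.integral_nonneg hy.2 fun τ hτ =>
      mul_nonneg (hk0 τ) (hg0 τ ⟨hy.1.trans hτ.1, hτ.2.trans hx.2⟩)
    linarith [hu_sub x hx y ⟨hy.1, hy.2.trans hx.2⟩]
  have hstep : ∀ x ∈ Icc a b, ∀ y ∈ Icc a x,
      (1 - ((∫ τ in a..x, k τ) - ∫ τ in a..y, k τ)) * u x ≤ u y := by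
    intro x hx y hy
    have hy' : y ∈ Icc a b := ⟨hy.1, hy.2.trans hx.2⟩
    have : ∫ τ in y..x, k τ * g τ ≤ ∫ τ in y..x, k τ * u x :=
      intervalIntegral.integral_mono_on hy.2 (hkg.mono_set (hsub x hx y hy'))
        ((hk.mono_set (hsub x hx y hy')).mul_const _) fun τ hτ =>
          mul_le_mul_of_nonneg_left ((h τ ⟨hy.1.trans hτ.1, hτ.2.trans hx.2⟩).trans
            (hu_mono x hx τ ⟨hy.1.trans hτ.1, hτ.2⟩)) (hk0 τ)
    rw [intervalIntegral.integral_mul_const, ← hdiff hk x hx y hy', ← hu_sub x hx y hy'] at this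
    linarith
  have hK : ContinuousOn (fun x => ∫ τ in a..x, k τ) (Icc a b) := by
    simpa [uIcc_of_le hab] using
      intervalIntegral.continuousOn_primitive_interval' hk left_mem_uIcc
  have hu0 : ∀ x ∈ Icc a b, 0 ≤ u x := fun x hx =>
    (hg0 a ha).trans ((h a ha).trans (hu_mono x hx a (left_mem_Icc.2 hx.1)))
  have := le_mul_exp_of_one_sub_mul_le hK intervalIntegral.integral_same
    (fun x hx => intervalIntegral.integral_nonneg hx.1 fun τ _ => hk0 τ) hu0 hstep x₀ hx₀
  simpa [hu] using (h x₀ hx₀).trans this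

end Gronwall

section LinearEquation

variable {F : Type*} [NormedAddCommGroup F] [NormedSpace ℝ F] {A : F →L[ℝ] F} {a b : ℝ}

theorem norm_smul_apply_sub_smul_apply_le (hA : ‖A‖ ≤ 1) (c₁ c₂ : ℝ) (w₁ w₂ : F) :
    ‖c₁ • A w₁ - c₂ • A w₂‖ ≤ |c₁| * ‖w₁ - w₂‖ + |c₁ - c₂| * ‖w₂‖ := by
  have hA' : ∀ w, ‖A w‖ ≤ ‖w‖ := fun w => by simpa using A.le_of_opNorm_le hA w
  calc ‖c₁ • A w₁ - c₂ • A w₂‖ = ‖c₁ • A (w₁ - w₂) + (c₁ - c₂) • A w₂‖ := by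
        rw [map_sub, smul_sub, sub_smul]; abel_nf
    _ ≤ |c₁| * ‖w₁ - w₂‖ + |c₁ - c₂| * ‖w₂‖ := by
        refine (norm_add_le _ _).trans ?_
        simp only [norm_smul, Real.norm_eq_abs]
        gcongr <;> exact hA' _

theorem norm_sub_le_of_eq_add_integral_smul (hA : ‖A‖ ≤ 1) {M : ℝ} {κ₁ κ₂ : ℝ → ℝ}
    {z₁ z₂ : ℝ → F} (hκ₁ : IntervalIntegrable κ₁ volume a b)
    (hκ₂ : IntervalIntegrable κ₂ volume a b)
    (hz₁ : ContinuousOn z₁ (Icc a b)) (hz₂ : ContinuousOn z₂ (Icc a b))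
    (hz₁_eq : ∀ x ∈ Icc a b, z₁ x = z₁ a + ∫ τ in a..x, κ₁ τ • A (z₁ τ))
    (hz₂_eq : ∀ x ∈ Icc a b, z₂ x = z₂ a + ∫ τ in a..x, κ₂ τ • A (z₂ τ))
    (h_init : z₁ a = z₂ a) (hM : ∀ x ∈ Icc a b, ‖z₂ x‖ ≤ M) :
    ∀ x ∈ Icc a b, ‖z₁ x - z₂ x‖ ≤
      M * (∫ τ in a..b, |κ₁ τ - κ₂ τ|) * exp (∫ τ in a..b, |κ₁ τ|) := by
  intro x₀ hx₀
  have hab : a ≤ b := hx₀.1.trans hx₀.2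
  have hsub : ∀ x ∈ Icc a b, uIcc a x ⊆ uIcc a b := fun x hx =>
    uIcc_subset_uIcc (Icc_subset_uIcc (left_mem_Icc.2 hab)) (Icc_subset_uIcc hx)
  have hIcc : uIcc a b = Icc a b := uIcc_of_le hab
  have hM0 : 0 ≤ M := (norm_nonneg _).trans (hM a (left_mem_Icc.2 hab))
  have hΔ0 : 0 ≤ ∫ τ in a..b, |κ₁ τ - κ₂ τ| :=
    intervalIntegral.integral_nonneg hab fun τ _ => abs_nonneg _
  have hrhs₁ : IntervalIntegrable (fun τ => κ₁ τ • A (z₁ τ)) volume a b :=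
    hκ₁.smul_continuousOn (hIcc ▸ A.continuous.comp_continuousOn hz₁)
  have hrhs₂ : IntervalIntegrable (fun τ => κ₂ τ • A (z₂ τ)) volume a b :=
    hκ₂.smul_continuousOn (hIcc ▸ A.continuous.comp_continuousOn hz₂)
  have hdiff_int : IntervalIntegrable (fun τ => |κ₁ τ| * ‖z₁ τ - z₂ τ‖) volume a b :=
    hκ₁.abs.mul_continuousOn (hIcc ▸ (hz₁.sub hz₂).norm)
  have hΔ_int : IntervalIntegrable (fun τ => |κ₁ τ - κ₂ τ|) volume a b := (hκ₁.sub hκ₂).abs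
  have hgronwall : ∀ x ∈ Icc a b, ‖z₁ x - z₂ x‖ ≤
      M * (∫ τ in a..b, |κ₁ τ - κ₂ τ|) + ∫ τ in a..x, |κ₁ τ| * ‖z₁ τ - z₂ τ‖ := by
    intro x hx
    have hI : ∀ {f : ℝ → ℝ}, IntervalIntegrable f volume a b → IntervalIntegrable f volume a x :=
      fun hf => hf.mono_set (hsub x hx)
    calc ‖z₁ x - z₂ x‖
        = ‖∫ τ in a..x, (κ₁ τ • A (z₁ τ) - κ₂ τ • A (z₂ τ))‖ := by
          rw [hz₁_eq x hx, hz₂_eq x hx, h_init, intervalIntegral.integral_sub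
            (hrhs₁.mono_set (hsub x hx)) (hrhs₂.mono_set (hsub x hx))]
          abel_nf
      _ ≤ ∫ τ in a..x, (|κ₁ τ| * ‖z₁ τ - z₂ τ‖ + |κ₁ τ - κ₂ τ| * M) := by
          refine intervalIntegral.norm_integral_le_of_norm_le hx.1
            (Eventually.of_forall fun τ hτ => ?_) ((hI hdiff_int).add ((hI hΔ_int).mul_const M))
          refine (norm_smul_apply_sub_smul_apply_le hA _ _ _ _).trans ?_
          gcongr
          exact hM τ ⟨hτ.1.le, hτ.2.trans hx.2⟩
      _ ≤ M * (∫ τ in a..b, |κ₁ τ - κ₂ τ|) + ∫ τ in a..x, |κ₁ τ| * ‖z₁ τ - z₂ τ‖ := by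
          rw [intervalIntegral.integral_add (hI hdiff_int) ((hI hΔ_int).mul_const M),
            intervalIntegral.integral_mul_const, add_comm, mul_comm]
          gcongr
          exact intervalIntegral.integral_mono_interval le_rfl hx.1 hx.2
            (Eventually.of_forall fun τ => abs_nonneg _) hΔ_int
  calc ‖z₁ x₀ - z₂ x₀‖
      ≤ M * (∫ τ in a..b, |κ₁ τ - κ₂ τ|) * exp (∫ τ in a..x₀, |κ₁ τ|) :=
        le_mul_exp_integral_of_le_add_integral hκ₁.abs (fun τ => abs_nonneg _)
          (hz₁.sub hz₂).norm (fun x _ => norm_nonneg _) hgronwall x₀ hx₀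
    _ ≤ M * (∫ τ in a..b, |κ₁ τ - κ₂ τ|) * exp (∫ τ in a..b, |κ₁ τ|) := by
        gcongr
        exact intervalIntegral.integral_mono_interval le_rfl hx₀.1 hx₀.2
          (Eventually.of_forall fun τ => abs_nonneg _) hκ₁.abs

end LinearEquation

theorem Real.exp_le_one_add_mul_exp (x : ℝ) : exp x ≤ 1 + x * exp x := by
  nlinarith [add_one_le_exp (-x), exp_pos x, exp_neg x, mul_inv_cancel₀ (exp_pos x).ne']

theorem norm_prod_le_sqrt {E F : Type*} [SeminormedAddCommGroup E] [SeminormedAddCommGroup F]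
    (u : E) (v : F) : ‖(u, v)‖ ≤ √(‖u‖ ^ 2 + ‖v‖ ^ 2) := by
  rw [Prod.norm_def]
  exact max_le (by simpa using abs_le_sqrt (x := ‖u‖) (le_add_of_nonneg_right (sq_nonneg ‖v‖)))
    (by simpa using abs_le_sqrt (x := ‖v‖) (le_add_of_nonneg_left (sq_nonneg ‖u‖)))

theorem tendsto_integral_abs_of_tendsto_integral_abs_sub {ι α : Type*} [MeasurableSpace α]
    {μ : Measure α} {l : Filter ι} {f : ι → α → ℝ} {g : α → ℝ}
    (hf : ∀ᶠ i in l, Integrable (f i) μ) (hg : Integrable g μ)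
    (h : Tendsto (fun i => ∫ x, |f i x - g x| ∂μ) l (𝓝 0)) :
    Tendsto (fun i => ∫ x, |f i x| ∂μ) l (𝓝 (∫ x, |g x| ∂μ)) := by
  rw [tendsto_iff_norm_sub_tendsto_zero]
  refine squeeze_zero' (Eventually.of_forall fun _ => norm_nonneg _) (hf.mono fun i hi => ?_) h
  rw [← integral_sub hi.abs hg.abs]
  exact (norm_integral_le_integral_norm _).trans (integral_mono (hi.abs.sub hg.abs).norm
    (hi.sub hg).abs fun x => norm_abs_sub_abs _ _)

section Frenet

variable (E : Type*) [NormedAddCommGroup E] [NormedSpace ℝ E]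

/-- The Frenet–Serret system for the frame `(t, n)` reads
`(t, n)' = κ • frenetRotation E (t, n)`. -/
def frenetRotation : E × E →L[ℝ] E × E :=
  (ContinuousLinearMap.snd ℝ E E).prod (-ContinuousLinearMap.fst ℝ E E)

theorem frenetRotation_apply (u v : E) : frenetRotation E (u, v) = (v, -u) := rfl

theorem norm_frenetRotation_le : ‖frenetRotation E‖ ≤ 1 :=
  ContinuousLinearMap.opNorm_le_bound _ zero_le_one fun w => by
    simp [frenetRotation, Prod.norm_def, max_comm]

variable {E}

/-- `X' = t`, `t' = κ n`, `n' = -κ t` in integral form, which is meaningful for `κ ∈ L¹`. -/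
structure IsFrenetCurve (a b : ℝ) (κ : ℝ → ℝ) (X t n : ℝ → E) : Prop where
  continuousOn_tangent : ContinuousOn t (Icc a b)
  continuousOn_normal : ContinuousOn n (Icc a b)
  curve_eq : ∀ s ∈ Icc a b, X s = X a + ∫ τ in a..s, t τ
  tangent_eq : ∀ s ∈ Icc a b, t s = t a + ∫ τ in a..s, κ τ • n τ
  normal_eq : ∀ s ∈ Icc a b, n s = n a - ∫ τ in a..s, κ τ • t τ

namespace IsFrenetCurve

variable {a b : ℝ} {κ κ₁ κ₂ : ℝ → ℝ} {X t n X₁ t₁ n₁ X₂ t₂ n₂ : ℝ → E}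

theorem continuousOn_frame (hC : IsFrenetCurve a b κ X t n) :
    ContinuousOn (fun s => (t s, n s)) (Icc a b) :=
  hC.continuousOn_tangent.prodMk hC.continuousOn_normal

variable [CompleteSpace E]

theorem frame_eq (hC : IsFrenetCurve a b κ X t n) (hκ : IntervalIntegrable κ volume a b) :
    ∀ s ∈ Icc a b, (t s, n s) = (t a, n a) + ∫ τ in a..s, κ τ • frenetRotation E (t τ, n τ) := by
  intro s hs
  have hint : IntervalIntegrable (fun τ => κ τ • frenetRotation E (t τ, n τ)) volume a s :=
    (hκ.mono_set (uIcc_subset_uIcc_left (Icc_subset_uIcc hs))).smul_continuousOn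
      (by rw [uIcc_of_le hs.1]; exact ((frenetRotation E).continuous.comp_continuousOn
        hC.continuousOn_frame).mono (Icc_subset_Icc_right hs.2))
  have hfst := (ContinuousLinearMap.fst ℝ E E).intervalIntegral_comp_comm hint
  have hsnd := (ContinuousLinearMap.snd ℝ E E).intervalIntegral_comp_comm hint
  simp only [ContinuousLinearMap.coe_fst', ContinuousLinearMap.coe_snd', frenetRotation_apply,
    Prod.smul_fst, Prod.smul_snd, smul_neg, intervalIntegral.integral_neg] at hfst hsnd
  simp only [frenetRotation_apply]
  ext
  · rw [Prod.fst_add, ← hfst, hC.tangent_eq s hs]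
  · rw [Prod.snd_add, ← hsnd, hC.normal_eq s hs, sub_eq_add_neg]

theorem norm_frame_le (hC : IsFrenetCurve a b κ X t n) (hκ : IntervalIntegrable κ volume a b) :
    ∀ s ∈ Icc a b, ‖(t s, n s)‖ ≤
      ‖(t a, n a)‖ * (1 + (∫ τ in a..b, |κ τ|) * exp (∫ τ in a..b, |κ τ|)) := by
  intro s hs
  have hconst := norm_sub_le_of_eq_add_integral_smul (κ₂ := fun _ => 0)
    (z₂ := fun _ => (t a, n a)) (norm_frenetRotation_le E) hκ
    intervalIntegrable_const hC.continuousOn_frame continuousOn_const (hC.frame_eq hκ)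
    (fun _ _ => by simp) rfl (fun _ _ => le_rfl) s hs
  simp only [sub_zero] at hconst
  calc ‖(t s, n s)‖ ≤ ‖(t a, n a)‖ + ‖(t s, n s) - (t a, n a)‖ := norm_le_norm_add_norm_sub' _ _
    _ ≤ _ := by linarith

theorem norm_sub_le (h₁ : IsFrenetCurve a b κ₁ X₁ t₁ n₁) (h₂ : IsFrenetCurve a b κ₂ X₂ t₂ n₂)
    (hκ₁ : IntervalIntegrable κ₁ volume a b) (hκ₂ : IntervalIntegrable κ₂ volume a b)
    (hX : X₁ a = X₂ a) (ht : t₁ a = t₂ a) (hn : n₁ a = n₂ a) :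
    ∀ s ∈ Icc a b, ‖X₁ s - X₂ s‖ ≤
      (‖(t₂ a, n₂ a)‖ * (1 + (∫ τ in a..b, |κ₂ τ|) * exp (∫ τ in a..b, |κ₂ τ|))) *
        (1 + (∫ τ in a..b, |κ₁ τ|) * exp (∫ τ in a..b, |κ₁ τ|)) *
        (b - a) * ∫ τ in a..b, |κ₁ τ - κ₂ τ| := by
  intro s hs
  have hab : a ≤ b := hs.1.trans hs.2
  set M := ‖(t₂ a, n₂ a)‖ * (1 + (∫ τ in a..b, |κ₂ τ|) * exp (∫ τ in a..b, |κ₂ τ|))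
  set K₁ := ∫ τ in a..b, |κ₁ τ|
  set Δ := ∫ τ in a..b, |κ₁ τ - κ₂ τ|
  have hframe := norm_sub_le_of_eq_add_integral_smul (norm_frenetRotation_le E) hκ₁ hκ₂
    h₁.continuousOn_frame h₂.continuousOn_frame (h₁.frame_eq hκ₁) (h₂.frame_eq hκ₂)
    (by rw [ht, hn]) (h₂.norm_frame_le hκ₂)
  have htangent : ∀ τ ∈ uIoc a s, ‖t₁ τ - t₂ τ‖ ≤ M * Δ * exp K₁ := fun τ hτ => by
    rw [uIoc_of_le hs.1] at hτ
    exact (norm_fst_le _).trans (hframe τ ⟨hτ.1.le, hτ.2.trans hs.2⟩)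
  have hX_sub : X₁ s - X₂ s = ∫ τ in a..s, (t₁ τ - t₂ τ) := by
    have hint : ∀ {f : ℝ → E}, ContinuousOn f (Icc a b) → IntervalIntegrable f volume a s :=
      fun hf => (hf.mono (Icc_subset_Icc_right hs.2)).intervalIntegrable_of_Icc hs.1
    rw [h₁.curve_eq s hs, h₂.curve_eq s hs, hX, intervalIntegral.integral_sub
      (hint h₁.continuousOn_tangent) (hint h₂.continuousOn_tangent)]
    abel
  have hM0 : 0 ≤ M := by
    have : 0 ≤ ∫ τ in a..b, |κ₂ τ| := intervalIntegral.integral_nonneg hab fun τ _ => abs_nonneg _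
    positivity
  have hΔ0 : 0 ≤ Δ := intervalIntegral.integral_nonneg hab fun τ _ => abs_nonneg _
  have hK₁ : exp K₁ ≤ 1 + K₁ * exp K₁ := exp_le_one_add_mul_exp K₁
  calc ‖X₁ s - X₂ s‖ ≤ M * Δ * exp K₁ * |s - a| := by
        rw [hX_sub]; exact intervalIntegral.norm_integral_le_of_norm_le_const htangent
    _ ≤ M * Δ * (1 + K₁ * exp K₁) * (b - a) := by
        rw [abs_of_nonneg (sub_nonneg.2 hs.1)]
        exact mul_le_mul (by gcongr) (by linarith [hs.2]) (sub_nonneg.2 hs.1)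
          (mul_nonneg (mul_nonneg hM0 hΔ0) ((exp_pos _).le.trans hK₁))
    _ = M * (1 + K₁ * exp K₁) * (b - a) * Δ := by ring

end IsFrenetCurve

end Frenet

theorem curve_convergence_general (a b : ℝ) (hab : a < b) (κ : ℝ → ℝ)
    (hκ : IntegrableOn κ (Set.Ioo a b))
    (κe : ℝ → ℝ → ℝ)
    (hκe_cont : ∀ ε > (0:ℝ), ContinuousOn (κe ε) (Set.Icc a b))
    (hκe_L1 : Tendsto (fun ε => ∫ τ in Set.Ioo a b, |κe ε τ - κ τ|)
      (𝓝[>] (0:ℝ)) (𝓝 0))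
    (X t n : ℝ → EuclideanSpace ℝ (Fin 2))
    (Xe te ne : ℝ → ℝ → EuclideanSpace ℝ (Fin 2))
    (ht_cont : ContinuousOn t (Set.Icc a b)) (hn_cont : ContinuousOn n (Set.Icc a b))
    (hte_cont : ∀ ε > (0:ℝ), ContinuousOn (te ε) (Set.Icc a b))
    (hne_cont : ∀ ε > (0:ℝ), ContinuousOn (ne ε) (Set.Icc a b))
    (hX : ∀ s ∈ Set.Icc a b, X s = X a + ∫ τ in a..s, t τ)
    (ht : ∀ s ∈ Set.Icc a b, t s = t a + ∫ τ in a..s, κ τ • n τ)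
    (hn : ∀ s ∈ Set.Icc a b, n s = n a - ∫ τ in a..s, κ τ • t τ)
    (hXe : ∀ ε > (0:ℝ), ∀ s ∈ Set.Icc a b, Xe ε s = Xe ε a + ∫ τ in a..s, te ε τ)
    (hte : ∀ ε > (0:ℝ), ∀ s ∈ Set.Icc a b,
      te ε s = te ε a + ∫ τ in a..s, κe ε τ • ne ε τ)
    (hne : ∀ ε > (0:ℝ), ∀ s ∈ Set.Icc a b,
      ne ε s = ne ε a - ∫ τ in a..s, κe ε τ • te ε τ)
    (hinit_X : ∀ ε > (0:ℝ), Xe ε a = X a)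
    (hinit_t : ∀ ε > (0:ℝ), te ε a = t a)
    (hinit_n : ∀ ε > (0:ℝ), ne ε a = n a) :
    ∀ s ∈ Set.Ioo a b,
      (∀ ε > (0:ℝ),
        ‖Xe ε s - X s‖ ≤
          (Real.sqrt (‖t a‖ ^ 2 + ‖n a‖ ^ 2) *
              (1 + (∫ τ in Set.Ioo a b, |κ τ|) *
                Real.exp (∫ τ in Set.Ioo a b, |κ τ|))) *
            (1 + (∫ τ in Set.Ioo a b, |κe ε τ|) *
              Real.exp (∫ τ in Set.Ioo a b, |κe ε τ|)) *
            (b - a) * (∫ τ in Set.Ioo a b, |κe ε τ - κ τ|)) ∧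
      Tendsto (fun ε => Xe ε s) (𝓝[>] (0:ℝ)) (𝓝 (X s)) := by
  intro s hs
  have hκ_int : IntervalIntegrable κ volume a b :=
    (intervalIntegrable_iff_integrableOn_Ioo_of_le hab.le).2 hκ
  have hκe_int : ∀ ε > (0:ℝ), IntervalIntegrable (κe ε) volume a b := fun ε hε =>
    (hκe_cont ε hε).intervalIntegrable_of_Icc hab.le
  have hbound := fun ε (hε : 0 < ε) => IsFrenetCurve.norm_sub_le
    ⟨hte_cont ε hε, hne_cont ε hε, hXe ε hε, hte ε hε, hne ε hε⟩ ⟨ht_cont, hn_cont, hX, ht, hn⟩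
    (hκe_int ε hε) hκ_int (hinit_X ε hε) (hinit_t ε hε) (hinit_n ε hε) s (Ioo_subset_Icc_self hs)
  simp only [intervalIntegral.integral_of_le hab.le, integral_Ioc_eq_integral_Ioo] at hbound
  refine ⟨fun ε hε => (hbound ε hε).trans (by gcongr; exact norm_prod_le_sqrt _ _), ?_⟩
  have hK : Tendsto (fun ε => ∫ τ in Ioo a b, |κe ε τ|) (𝓝[>] 0) (𝓝 (∫ τ in Ioo a b, |κ τ|)) :=
    tendsto_integral_abs_of_tendsto_integral_abs_sub (eventually_nhdsWithin_of_forall fun ε hε =>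
      (hκe_int ε hε).1.mono_set Ioo_subset_Ioc_self) hκ hκe_L1
  rw [tendsto_iff_norm_sub_tendsto_zero]
  refine squeeze_zero' (Eventually.of_forall fun _ => norm_nonneg _)
    (eventually_nhdsWithin_of_forall hbound) ?_
  simpa using (((hK.mul ((continuous_exp.tendsto _).comp hK)).const_add 1).const_mul _
    |>.mul_const (b - a)).mul hκe_L1

/-- Pointwise convergence of the regularized arc-length parametrized curves
`X_ε` to the degenerate curve `X`:
`‖X_ε(s) - X(s)‖₂ ≤ M·M_ε·(b-a)·‖κ_ε - κ‖_{L¹(J)} → 0` as `ε → 0`, where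
`X' = t` and `(t,n)` solves the Frenet–Serret system. -/
theorem curve_convergence (a b : ℝ) (hab : a < b) (κ : ℝ → ℝ)
    (hκ : IntegrableOn κ (Set.Ioo a b))
    (κe : ℝ → ℝ → ℝ)
    (hκe_cont : ∀ ε > (0:ℝ), ContinuousOn (κe ε) (Set.Icc a b))
    (hκe_bdd : ∀ ε > (0:ℝ), ∃ C, ∀ s ∈ Set.Icc a b, |κe ε s| ≤ C)
    (hκe_L1 : Tendsto (fun ε => ∫ τ in Set.Ioo a b, |κe ε τ - κ τ|)
      (𝓝[>] (0:ℝ)) (𝓝 0))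
    (X t n : ℝ → EuclideanSpace ℝ (Fin 2))
    (Xe te ne : ℝ → ℝ → EuclideanSpace ℝ (Fin 2))
    (ht_cont : ContinuousOn t (Set.Icc a b)) (hn_cont : ContinuousOn n (Set.Icc a b))
    (hte_cont : ∀ ε > (0:ℝ), ContinuousOn (te ε) (Set.Icc a b))
    (hne_cont : ∀ ε > (0:ℝ), ContinuousOn (ne ε) (Set.Icc a b))
    (hX : ∀ s ∈ Set.Icc a b, X s = X a + ∫ τ in a..s, t τ)
    (ht : ∀ s ∈ Set.Icc a b, t s = t a + ∫ τ in a..s, κ τ • n τ)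
    (hn : ∀ s ∈ Set.Icc a b, n s = n a - ∫ τ in a..s, κ τ • t τ)
    (hXe : ∀ ε > (0:ℝ), ∀ s ∈ Set.Icc a b, Xe ε s = Xe ε a + ∫ τ in a..s, te ε τ)
    (hte : ∀ ε > (0:ℝ), ∀ s ∈ Set.Icc a b,
      te ε s = te ε a + ∫ τ in a..s, κe ε τ • ne ε τ)
    (hne : ∀ ε > (0:ℝ), ∀ s ∈ Set.Icc a b,
      ne ε s = ne ε a - ∫ τ in a..s, κe ε τ • te ε τ)
    (hinit_X : ∀ ε > (0:ℝ), Xe ε a = X a)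
    (hinit_t : ∀ ε > (0:ℝ), te ε a = t a)
    (hinit_n : ∀ ε > (0:ℝ), ne ε a = n a) :
    ∀ s ∈ Set.Ioo a b,
      (∀ ε > (0:ℝ),
        ‖Xe ε s - X s‖ ≤
          (Real.sqrt (‖t a‖ ^ 2 + ‖n a‖ ^ 2) *
              (1 + (∫ τ in Set.Ioo a b, |κ τ|) *
                Real.exp (∫ τ in Set.Ioo a b, |κ τ|))) *
            (1 + (∫ τ in Set.Ioo a b, |κe ε τ|) *
              Real.exp (∫ τ in Set.Ioo a b, |κe ε τ|)) *
            (b - a) * (∫ τ in Set.Ioo a b, |κe ε τ - κ τ|)) ∧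
      Tendsto (fun ε => Xe ε s) (𝓝[>] (0:ℝ)) (𝓝 (X s)) :=
  curve_convergence_general a b hab κ hκ κe hκe_cont hκe_L1 X t n Xe te ne ht_cont hn_cont hte_cont
    hne_cont hX ht hn hXe hte hne hinit_X hinit_t hinit_n
end

section
/- Let I=(a,b) be bounded, u ∈ L²(I) real, and define the quasi-derivative φ^{[1]} = φ' - uφ for φ ∈ H¹(I) with φ^{[1]} ∈ W^{1,1}(I). Then for φ, ψ in the maximal domain, the Lagrange identity holds: ⟨Lφ, ψ⟩_{L²} - ⟨φ, Lψ⟩_{L²} = [ψ̄^{[1]}φ - ψ̄φ^{[1]}]_a^b, where Lφ = -(φ^{[1]})' - uφ^{[1]} - u²φ. -/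
open MeasureTheory Set Filter Topology ComplexConjugate

/-- `-(f^{[1]})' - u f^{[1]} - u² f`, with the quasi-derivative `f^{[1]}` and its derivative
passed as `f1` and `Df1`. -/
def quasiSturmLiouville (u : ℝ → ℝ) (f f1 Df1 : ℝ → ℂ) (x : ℝ) : ℂ :=
  -(Df1 x) - (u x : ℂ) * f1 x - (u x : ℂ) ^ 2 * f x

def lagrangeBracket (φ ψ φ1 ψ1 : ℝ → ℂ) (x : ℝ) : ℂ :=
  conj (ψ1 x) * φ x - conj (ψ x) * φ1 x

/-- All terms containing `u` cancel, so no derivative of `u` is needed. -/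
theorem hasDerivAt_lagrangeBracket {u : ℝ → ℝ} {φ ψ φ1 ψ1 Dφ1 Dψ1 : ℝ → ℂ} {x : ℝ}
    (hφ : HasDerivAt φ (φ1 x + (u x : ℂ) * φ x) x)
    (hψ : HasDerivAt ψ (ψ1 x + (u x : ℂ) * ψ x) x)
    (hφ1 : HasDerivAt φ1 (Dφ1 x) x) (hψ1 : HasDerivAt ψ1 (Dψ1 x) x) :
    HasDerivAt (lagrangeBracket φ ψ φ1 ψ1)
      (quasiSturmLiouville u φ φ1 Dφ1 x * conj (ψ x) -
        φ x * conj (quasiSturmLiouville u ψ ψ1 Dψ1 x)) x := by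
  refine ((hψ1.star.fun_mul hφ).fun_sub (hψ.star.fun_mul hφ1)).congr_deriv ?_
  simp only [quasiSturmLiouville, ← starRingEnd_apply, map_sub, map_neg, map_mul, map_add,
    map_pow, Complex.conj_ofReal]
  ring

theorem adapted_lagrange_identity_general (a b : ℝ) (hab : a < b) (u : ℝ → ℝ)
    (φ ψ φ1 ψ1 Dφ1 Dψ1 : ℝ → ℂ)
    (hφ : ∀ x ∈ Set.Icc a b, HasDerivAt φ (φ1 x + (u x : ℂ) * φ x) x)
    (hψ : ∀ x ∈ Set.Icc a b, HasDerivAt ψ (ψ1 x + (u x : ℂ) * ψ x) x)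
    (hφ1 : ∀ x ∈ Set.Icc a b, HasDerivAt φ1 (Dφ1 x) x)
    (hψ1 : ∀ x ∈ Set.Icc a b, HasDerivAt ψ1 (Dψ1 x) x)
    (Lφ Lψ : ℝ → ℂ)
    (hLφ : Lφ = fun x => -(Dφ1 x) - (u x : ℂ) * φ1 x - (u x : ℂ) ^ 2 * φ x)
    (hLψ : Lψ = fun x => -(Dψ1 x) - (u x : ℂ) * ψ1 x - (u x : ℂ) ^ 2 * ψ x)
    (hint1 : IntervalIntegrable (fun x => Lφ x * (starRingEnd ℂ) (ψ x)) volume a b)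
    (hint2 : IntervalIntegrable (fun x => φ x * (starRingEnd ℂ) (Lψ x)) volume a b) :
    (∫ x in a..b, Lφ x * (starRingEnd ℂ) (ψ x)) -
      (∫ x in a..b, φ x * (starRingEnd ℂ) (Lψ x)) =
    ((starRingEnd ℂ) (ψ1 b) * φ b - (starRingEnd ℂ) (ψ b) * φ1 b) -
      ((starRingEnd ℂ) (ψ1 a) * φ a - (starRingEnd ℂ) (ψ a) * φ1 a) := by
  have hderiv : ∀ x ∈ uIcc a b, HasDerivAt (lagrangeBracket φ ψ φ1 ψ1)
      (Lφ x * conj (ψ x) - φ x * conj (Lψ x)) x := by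
    intro x hx
    rw [uIcc_of_le hab.le] at hx
    subst hLφ hLψ
    exact hasDerivAt_lagrangeBracket (hφ x hx) (hψ x hx) (hφ1 x hx) (hψ1 x hx)
  rw [← intervalIntegral.integral_sub hint1 hint2,
    intervalIntegral.integral_eq_sub_of_hasDerivAt hderiv (hint1.sub hint2)]
  rfl

/-- Adapted Lagrange identity for the Savchuk–Shkalikov quasi-derivative
`φ^{[1]} = φ' - uφ`: for `φ, ψ` in the maximal domain of
`Lφ = -(φ^{[1]})' - uφ^{[1]} - u²φ`,
`⟨Lφ, ψ⟩ - ⟨φ, Lψ⟩ = [ψ̄^{[1]}φ - ψ̄φ^{[1]}]_a^b`. -/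
theorem adapted_lagrange_identity (a b : ℝ) (hab : a < b) (u : ℝ → ℝ)
    (hu : MemLp u 2 (volume.restrict (Set.Ioo a b)))
    (φ ψ φ1 ψ1 Dφ1 Dψ1 : ℝ → ℂ)
    (hφ : ∀ x ∈ Set.Icc a b, HasDerivAt φ (φ1 x + (u x : ℂ) * φ x) x)
    (hψ : ∀ x ∈ Set.Icc a b, HasDerivAt ψ (ψ1 x + (u x : ℂ) * ψ x) x)
    (hφ1 : ∀ x ∈ Set.Icc a b, HasDerivAt φ1 (Dφ1 x) x)
    (hψ1 : ∀ x ∈ Set.Icc a b, HasDerivAt ψ1 (Dψ1 x) x)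
    (Lφ Lψ : ℝ → ℂ)
    (hLφ : Lφ = fun x => -(Dφ1 x) - (u x : ℂ) * φ1 x - (u x : ℂ) ^ 2 * φ x)
    (hLψ : Lψ = fun x => -(Dψ1 x) - (u x : ℂ) * ψ1 x - (u x : ℂ) ^ 2 * ψ x)
    (hint1 : IntervalIntegrable (fun x => Lφ x * (starRingEnd ℂ) (ψ x)) volume a b)
    (hint2 : IntervalIntegrable (fun x => φ x * (starRingEnd ℂ) (Lψ x)) volume a b) :
    (∫ x in a..b, Lφ x * (starRingEnd ℂ) (ψ x)) -
      (∫ x in a..b, φ x * (starRingEnd ℂ) (Lψ x)) =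
    ((starRingEnd ℂ) (ψ1 b) * φ b - (starRingEnd ℂ) (ψ b) * φ1 b) -
      ((starRingEnd ℂ) (ψ1 a) * φ a - (starRingEnd ℂ) (ψ a) * φ1 a) :=
  adapted_lagrange_identity_general a b hab u φ ψ φ1 ψ1 Dφ1 Dψ1 hφ hψ hφ1 hψ1 Lφ Lψ hLφ hLψ hint1
    hint2
end
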